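/- If d = 1, then G_λ(0, 0) ~ γ_1 √π / √λ as λ → 0+; that is, lim_{λ→0+} √λ · G_λ(0, 0) = γ_1 √π. -/

import Mathlib

open MeasureTheory Real Filter Topology Asymptotics

/-- Fourier symbol `φ(θ) = ∑_z a(z) cos(zθ)` of the random walk on `ℤ`. -/
noncomputable def phi1 (a : ℤ → ℝ) (θ : ℝ) : ℝ :=
  ∑' z : ℤ, a z * Real.cos ((z : ℝ) * θ)

/-- Transition probability `p(t;x,y) = (2π)⁻¹ ∫_{-π}^{π} e^{φ(θ)t} cos(θ(y-x)) dθ`. -/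
noncomputable def p1 (a : ℤ → ℝ) (t : ℝ) (x y : ℤ) : ℝ :=
  (2 * π)⁻¹ * ∫ θ in (-π)..π, Real.exp (phi1 a θ * t) * Real.cos (θ * ((y : ℝ) - (x : ℝ)))

/-- Laplace transform `G_λ(x,y) = ∫_0^∞ e^{-λt} p(t;x,y) dt`. -/
noncomputable def G1 (a : ℤ → ℝ) (lam : ℝ) (x y : ℤ) : ℝ :=
  ∫ t in Set.Ioi (0 : ℝ), Real.exp (-lam * t) * p1 a t x y

/-- `φ''(0) = -∑_z a(z) z²`. -/
noncomputable def phi1'' (a : ℤ → ℝ) : ℝ := -∑' z : ℤ, a z * (z : ℝ) ^ 2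

/-- `γ₁ = 1/√(2π |φ''(0)|)`. -/
noncomputable def gam1 (a : ℤ → ℝ) : ℝ := 1 / Real.sqrt (2 * π * |phi1'' a|)

/-- `ρ₁(r) = (a/(2π)) ∫_{-π}^{π} (cos(rθ) - 1)/φ(θ) dθ` for `r ≠ 0`, and `ρ₁(0) = 1`. -/
noncomputable def rho1 (a : ℤ → ℝ) (r : ℤ) : ℝ :=
  if r = 0 then 1 else
    (-(a 0) / (2 * π)) * ∫ θ in (-π)..π, (Real.cos ((r : ℝ) * θ) - 1) / phi1 a θ

/-- `γ̃₁(r) = (r²/(4π)) ∫_ℝ v² e^{φ''(0)v²/2} dv`. -/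
noncomputable def gamTilde1 (a : ℤ → ℝ) (r : ℤ) : ℝ :=
  ((r : ℝ) ^ 2 / (4 * π)) * ∫ v : ℝ, v ^ 2 * Real.exp (phi1'' a * v ^ 2 / 2)

/-- The constant `C₁(x,y)` from Theorem 1 of the paper (with `a = -a(0)`). -/
noncomputable def C1Const (a : ℤ → ℝ) (x y : ℤ) : ℝ :=
  (rho1 a (y - x) + rho1 a x - rho1 a y) / (4 * (-(a 0)) * π * gam1 a) +
    (-(a 0)) * π * (y : ℝ) ^ 2 * gam1 a ^ 3 *
      (rho1 a (y - x) - rho1 a x - rho1 a y) / (rho1 a y) ^ 2 +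
    2 * (-(a 0)) * π * (x : ℝ) * (y : ℝ) * gam1 a ^ 3 / rho1 a y

/-! Fubini and `∫₀^∞ e^{-(λ-φ)t} dt = (λ-φ)⁻¹` give `G_λ(0,0) = (2π)⁻¹ ∫_{-π}^{π} (λ - φ θ)⁻¹ dθ`.
Since `1 - cos y = 2 sin² (y/2)`, `φ θ = -ψ θ θ²` with `ψ` continuous, `ψ 0 = |φ''(0)|/2`, and
`ψ > 0` on `[-π, π]` by irreducibility, so `ψ ≥ c > 0` there. Substituting `θ = √λ u` turns
`√λ ∫ (λ - φ θ)⁻¹ dθ` into `∫ (1 + ψ(√λ u) u²)⁻¹ du` over `|u| ≤ π/√λ`, which converges by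
dominated convergence (majorant `(1 + c u²)⁻¹`) to `∫ (1 + ψ 0 u²)⁻¹ du = π / √(ψ 0)`. -/

open Set

lemma mul_sinc (x : ℝ) : x * sinc x = sin x := by
  rcases eq_or_ne x 0 with rfl | hx
  · simp
  · rw [sinc_of_ne_zero hx, mul_div_cancel₀ _ hx]

lemma one_sub_cos_mul_eq (y θ : ℝ) :
    1 - cos (y * θ) = y ^ 2 / 2 * sinc (y * θ / 2) ^ 2 * θ ^ 2 := by
  have h := cos_two_mul_eq_one_sub (y * θ / 2)
  rw [← mul_sinc (y * θ / 2), mul_div_cancel₀ _ two_ne_zero] at h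
  linear_combination -h

lemma cos_eq_one_of_closure_eq_top {S : Set ℤ} (hS : AddSubgroup.closure S = ⊤) {θ : ℝ}
    (h : ∀ z ∈ S, cos (z * θ) = 1) : cos θ = 1 := by
  let H : AddSubgroup ℤ := (zmultiplesHom Real.Angle (θ : Real.Angle)).ker
  have hmem : ∀ z : ℤ, z ∈ H ↔ cos (z * θ) = 1 := fun z => by
    rw [AddMonoidHom.mem_ker, zmultiplesHom_apply, ← Angle.intCast_mul_eq_zsmul,
      Angle.coe_eq_zero_iff, cos_eq_one_iff]
    simp only [zsmul_eq_mul]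
  have h1 : (1 : ℤ) ∈ H :=
    (AddSubgroup.closure_le H).mpr (fun z hz => (hmem z).2 (h z hz)) (hS ▸ AddSubgroup.mem_top 1)
  simpa using (hmem 1).1 h1

lemma integral_inv_one_add_mul_sq {k : ℝ} (hk : 0 < k) :
    ∫ u : ℝ, (1 + k * u ^ 2)⁻¹ = π / √k := by
  have h : (fun u : ℝ => (1 + k * u ^ 2)⁻¹) = fun u => (1 + (√k * u) ^ 2)⁻¹ := by
    simp [mul_pow, sq_sqrt hk.le]
  rw [h, Measure.integral_comp_mul_left (fun x : ℝ => (1 + x ^ 2)⁻¹), integral_univ_inv_one_add_sq,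
    smul_eq_mul, abs_of_pos (inv_pos.2 (sqrt_pos.2 hk)), inv_mul_eq_div]

lemma integrable_inv_one_add_mul_sq {k : ℝ} (hk : 0 < k) :
    Integrable fun u : ℝ => (1 + k * u ^ 2)⁻¹ := by
  have h : (fun u : ℝ => (1 + k * u ^ 2)⁻¹) = fun u => (1 + (√k * u) ^ 2)⁻¹ := by
    simp [mul_pow, sq_sqrt hk.le]
  rw [h]
  exact integrable_inv_one_add_sq.comp_mul_left' (sqrt_pos.2 hk).ne'

lemma mul_setIntegral_eq_integral_indicator_comp_mul {b : ℝ} (hb : 0 < b) (h : ℝ → ℝ)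
    {s : Set ℝ} (hs : MeasurableSet s) :
    b * ∫ θ in s, h θ = ∫ u, s.indicator (fun θ => b ^ 2 * h θ) (b * u) := by
  rw [Measure.integral_comp_mul_left (s.indicator _), integral_indicator hs, integral_const_mul,
    smul_eq_mul, abs_of_pos (inv_pos.2 hb)]
  field_simp

lemma integral_Ioi_exp_neg_mul_mul_integral_exp {α : Type*} [MeasurableSpace α] (μ : Measure α)
    [IsFiniteMeasure μ] {f : α → ℝ} (hf : Measurable f) (hf0 : ∀ x, f x ≤ 0) {lam : ℝ}
    (hlam : 0 < lam) :
    ∫ t in Ioi 0, exp (-lam * t) * ∫ x, exp (f x * t) ∂μ = ∫ x, (lam - f x)⁻¹ ∂μ := by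
  have hint : Integrable (Function.uncurry fun t x => exp ((f x - lam) * t))
      ((volume.restrict (Ioi 0)).prod μ) := by
    refine ((exp_neg_integrableOn_Ioi 0 hlam).mul_prod (integrable_const (1 : ℝ))).mono
      (by fun_prop) ?_
    filter_upwards [Measure.quasiMeasurePreserving_fst.ae (ae_restrict_mem measurableSet_Ioi)]
      with p (hp : 0 < p.1)
    simp only [Function.uncurry, norm_of_nonneg (exp_nonneg _), mul_one, exp_le_exp]
    nlinarith [hf0 p.2]
  calc ∫ t in Ioi 0, exp (-lam * t) * ∫ x, exp (f x * t) ∂μ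
      = ∫ t in Ioi 0, ∫ x, exp ((f x - lam) * t) ∂μ := by
        congr with t
        rw [← integral_const_mul]
        congr with x
        rw [← exp_add]
        ring_nf
    _ = ∫ x, (∫ t in Ioi 0, exp ((f x - lam) * t)) ∂μ := integral_integral_swap hint
    _ = ∫ x, (lam - f x)⁻¹ ∂μ := by
        congr with x
        rw [integral_exp_mul_Ioi (by linarith [hf0 x]), mul_zero, exp_zero, ← neg_sub, div_neg,
          neg_div, neg_neg, one_div]

lemma tendsto_sqrt_mul_setIntegral_inv_add_mul_sq {g : ℝ → ℝ} (hg : Continuous g) {s : Set ℝ}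
    (hs : MeasurableSet s) (hs0 : s ∈ 𝓝 0) {c : ℝ} (hc : 0 < c) (hgc : ∀ θ ∈ s, c ≤ g θ) :
    Tendsto (fun lam => √lam * ∫ θ in s, (lam + g θ * θ ^ 2)⁻¹) (𝓝[>] 0) (𝓝 (π / √(g 0))) := by
  set F : ℝ → ℝ → ℝ := fun lam u =>
    s.indicator (fun θ => lam * (lam + g θ * θ ^ 2)⁻¹) (√lam * u)
  have hF : ∀ lam > 0, ∀ u, √lam * u ∈ s → F lam u = (1 + g (√lam * u) * u ^ 2)⁻¹ := by
    intro lam hlam u hu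
    simp only [F, indicator_of_mem hu, mul_pow, sq_sqrt hlam.le]
    rw [show lam + g (√lam * u) * (lam * u ^ 2) = lam * (1 + g (√lam * u) * u ^ 2) by ring,
      mul_inv, mul_inv_cancel_left₀ hlam.ne']
  have hsqrt : Tendsto (fun lam => √lam) (𝓝[>] 0) (𝓝 0) := by
    simpa using (continuous_sqrt.tendsto 0).mono_left nhdsWithin_le_nhds
  have hg0 : 0 < g 0 := hc.trans_le (hgc 0 (mem_of_mem_nhds hs0))
  have hlim : Tendsto (fun lam => ∫ u, F lam u) (𝓝[>] 0) (𝓝 (∫ u, (1 + g 0 * u ^ 2)⁻¹)) := by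
    refine tendsto_integral_filter_of_dominated_convergence (fun u => (1 + c * u ^ 2)⁻¹) ?_ ?_
      (integrable_inv_one_add_mul_sq hc) ?_
    · refine Eventually.of_forall fun lam => ?_
      exact ((Measurable.indicator (by fun_prop) hs).comp
        (measurable_const_mul _)).aestronglyMeasurable
    · filter_upwards [self_mem_nhdsWithin] with lam (hlam : 0 < lam)
      refine Eventually.of_forall fun u => ?_
      by_cases hu : √lam * u ∈ s
      · have hcu := hgc _ hu
        have hcu2 := mul_le_mul_of_nonneg_right hcu (sq_nonneg u)
        rw [hF lam hlam u hu, norm_inv, norm_of_nonneg (by nlinarith [sq_nonneg u])]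
        gcongr
      · simp only [F, indicator_of_notMem hu, norm_zero]
        positivity
    · refine Eventually.of_forall fun u => ?_
      have hsu : Tendsto (fun lam => √lam * u) (𝓝[>] 0) (𝓝 0) := by
        simpa using hsqrt.mul_const u
      have hcont : Tendsto (fun lam => (1 + g (√lam * u) * u ^ 2)⁻¹) (𝓝[>] 0)
          (𝓝 (1 + g 0 * u ^ 2)⁻¹) :=
        (tendsto_const_nhds.add (((hg.tendsto 0).comp hsu).mul_const _)).inv₀ (by positivity)
      refine hcont.congr' ?_
      filter_upwards [self_mem_nhdsWithin, hsu hs0] with lam hlam hu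
      exact (hF lam hlam u hu).symm
  rw [← integral_inv_one_add_mul_sq hg0]
  refine hlim.congr' ?_
  filter_upwards [self_mem_nhdsWithin] with lam (hlam : 0 < lam)
  rw [mul_setIntegral_eq_integral_indicator_comp_mul (sqrt_pos.2 hlam) _ hs, sq_sqrt hlam.le]

lemma gam1_mul_sqrt_pi (a : ℤ → ℝ) :
    gam1 a * √π = (2 * π)⁻¹ * (π / √(|phi1'' a| / 2)) := by
  set S := |phi1'' a|
  have h1 : √(2 * π * S) = √π * √(2 * S) := by
    rw [← sqrt_mul pi_pos.le]
    ring_nf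
  have h2 : √(S / 2) = √(2 * S) / 2 := by
    rw [show S / 2 = 2 * S / 2 ^ 2 by ring, sqrt_div' _ (by positivity), sqrt_sq zero_le_two]
  have hπ : √π ≠ 0 := (sqrt_pos.2 pi_pos).ne'
  rw [gam1, h1, h2]
  rcases eq_or_ne (√(2 * S)) 0 with h | h
  · simp [h]
  · field_simp

/-- `ψ(θ) = -φ(θ) / θ²`, continuously extended to `θ = 0` through
`1 - cos y = 2 sin² (y / 2)`. -/
noncomputable def psi1 (a : ℤ → ℝ) (θ : ℝ) : ℝ :=
  ∑' z : ℤ, a z * (z : ℝ) ^ 2 / 2 * sinc (z * θ / 2) ^ 2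

section Symbol

variable {a : ℤ → ℝ}

lemma summable_mul_cos (ha : Summable a) (θ : ℝ) :
    Summable fun z : ℤ => a z * cos (z * θ) :=
  ha.abs.of_norm_bounded fun z => by
    simpa [abs_mul] using mul_le_of_le_one_right (abs_nonneg (a z)) (abs_cos_le_one (z * θ))

lemma phi1_eq_neg_psi1_mul_sq (hsum : HasSum a 0) (θ : ℝ) :
    phi1 a θ = -(psi1 a θ * θ ^ 2) := by
  have hsplit : phi1 a θ = ∑' z : ℤ, -(a z * (1 - cos (z * θ))) := by
    simp only [mul_sub, mul_one, neg_sub]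
    rw [(summable_mul_cos hsum.summable θ).tsum_sub hsum.summable, hsum.tsum_eq, sub_zero, phi1]
  rw [hsplit, tsum_neg, psi1, ← tsum_mul_right]
  simp only [one_sub_cos_mul_eq]
  congr 2 with z
  ring

lemma psi1_term_nonneg (hpos : ∀ z : ℤ, z ≠ 0 → 0 ≤ a z) (θ : ℝ) (z : ℤ) :
    0 ≤ a z * (z : ℝ) ^ 2 / 2 * sinc (z * θ / 2) ^ 2 := by
  rcases eq_or_ne z 0 with rfl | hz
  · simp
  · have := hpos z hz
    positivity

lemma psi1_nonneg (hpos : ∀ z : ℤ, z ≠ 0 → 0 ≤ a z) (θ : ℝ) : 0 ≤ psi1 a θ :=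
  tsum_nonneg (psi1_term_nonneg hpos θ)

lemma psi1_zero (hpos : ∀ z : ℤ, z ≠ 0 → 0 ≤ a z) : psi1 a 0 = |phi1'' a| / 2 := by
  have hS : 0 ≤ ∑' z : ℤ, a z * (z : ℝ) ^ 2 := by
    simpa [sinc_zero] using tsum_nonneg fun z => mul_nonneg (psi1_term_nonneg hpos 0 z) zero_le_two
  simp [psi1, phi1'', tsum_div_const, abs_of_nonneg hS]

lemma norm_psi1_term_le (z : ℤ) (θ : ℝ) :
    ‖a z * (z : ℝ) ^ 2 / 2 * sinc (z * θ / 2) ^ 2‖ ≤ |(z : ℝ) ^ 2 * a z| / 2 := by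
  rw [norm_mul, norm_pow, Real.norm_eq_abs, Real.norm_eq_abs, abs_div, abs_two, mul_comm (a z)]
  exact mul_le_of_le_one_right (by positivity)
    (pow_le_one₀ (abs_nonneg _) (abs_sinc_le_one _))

lemma continuous_psi1 (hvar : Summable fun z : ℤ => (z : ℝ) ^ 2 * a z) : Continuous (psi1 a) :=
  continuous_tsum (fun z => by fun_prop) (hvar.abs.div_const 2) norm_psi1_term_le

lemma summable_psi1 (hvar : Summable fun z : ℤ => (z : ℝ) ^ 2 * a z) (θ : ℝ) :
    Summable fun z : ℤ => a z * (z : ℝ) ^ 2 / 2 * sinc (z * θ / 2) ^ 2 :=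
  (hvar.abs.div_const 2).of_norm_bounded fun z => norm_psi1_term_le z θ

lemma exists_ne_zero_pos (hneg : a 0 < 0) (hirr : AddSubgroup.closure {z : ℤ | 0 < a z} = ⊤) :
    ∃ z : ℤ, z ≠ 0 ∧ 0 < a z := by
  by_contra! h
  have hempty : {z : ℤ | 0 < a z} = ∅ := eq_empty_iff_forall_notMem.2 fun z (hz : 0 < a z) =>
    (h z (fun h0 => (h0 ▸ hneg).not_gt hz)).not_gt hz
  rw [hempty, AddSubgroup.closure_empty] at hirr
  exact one_ne_zero ((AddSubgroup.mem_bot).1 (hirr ▸ AddSubgroup.mem_top (1 : ℤ)))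

lemma psi1_pos (hpos : ∀ z : ℤ, z ≠ 0 → 0 ≤ a z) (hneg : a 0 < 0)
    (hvar : Summable fun z : ℤ => (z : ℝ) ^ 2 * a z)
    (hirr : AddSubgroup.closure {z : ℤ | 0 < a z} = ⊤) {θ : ℝ} (hθ : θ ∈ Icc (-π) π) :
    0 < psi1 a θ := by
  obtain ⟨z, hz⟩ : ∃ z : ℤ, 0 < a z * (z : ℝ) ^ 2 / 2 * sinc (z * θ / 2) ^ 2 := by
    rcases eq_or_ne θ 0 with rfl | hθ0
    · obtain ⟨z, hz0, haz⟩ := exists_ne_zero_pos hneg hirr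
      exact ⟨z, by simp only [mul_zero, zero_div, sinc_zero]; positivity⟩
    · obtain ⟨z, haz, hcos⟩ : ∃ z ∈ {z : ℤ | 0 < a z}, cos (z * θ) ≠ 1 := by
        by_contra! h
        refine hθ0 ((cos_eq_one_iff_of_lt_of_lt ?_ ?_).1 (cos_eq_one_of_closure_eq_top hirr h))
        · linarith [hθ.1, pi_pos]
        · linarith [hθ.2, pi_pos]
      have hprod : 0 < a z * (z : ℝ) ^ 2 / 2 * sinc (z * θ / 2) ^ 2 * θ ^ 2 := by
        rw [show a z * (z : ℝ) ^ 2 / 2 * sinc (z * θ / 2) ^ 2 * θ ^ 2 = a z * (1 - cos (z * θ))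
          by rw [one_sub_cos_mul_eq]; ring]
        exact mul_pos haz (sub_pos.2 ((cos_le_one _).lt_of_ne hcos))
      exact ⟨z, pos_of_mul_pos_left hprod (sq_nonneg θ)⟩
  exact (summable_psi1 hvar θ).tsum_pos (psi1_term_nonneg hpos θ) z hz

lemma G1_zero_zero_eq (hpos : ∀ z : ℤ, z ≠ 0 → 0 ≤ a z) (hsum : HasSum a 0)
    (hvar : Summable fun z : ℤ => (z : ℝ) ^ 2 * a z) {lam : ℝ} (hlam : 0 < lam) :
    G1 a lam 0 0 = (2 * π)⁻¹ * ∫ θ in Ioc (-π) π, (lam - phi1 a θ)⁻¹ := by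
  have hp1 : ∀ t, p1 a t 0 0 = (2 * π)⁻¹ * ∫ θ in Ioc (-π) π, exp (phi1 a θ * t) := fun t => by
    simp [p1, intervalIntegral.integral_of_le (neg_le_self pi_pos.le)]
  have hphi : phi1 a = fun θ => -(psi1 a θ * θ ^ 2) := funext (phi1_eq_neg_psi1_mul_sq hsum)
  have hcont : Continuous (phi1 a) := by
    have := continuous_psi1 hvar
    rw [hphi]
    fun_prop
  have : IsFiniteMeasure (volume.restrict (Ioc (-π) π)) :=
    isFiniteMeasure_restrict.2 measure_Ioc_lt_top.ne
  simp only [G1, hp1, mul_left_comm (exp _), integral_const_mul]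
  rw [integral_Ioi_exp_neg_mul_mul_integral_exp _ hcont.measurable _ hlam]
  intro θ
  rw [hphi]
  exact neg_nonpos.2 (mul_nonneg (psi1_nonneg hpos θ) (sq_nonneg θ))

end Symbol

theorem Glam_asymptotic_d1_general
    (a : ℤ → ℝ)
    (hpos : ∀ z : ℤ, z ≠ 0 → 0 ≤ a z)
    (hneg : a 0 < 0)
    (hsum : HasSum a 0)
    (hvar : Summable fun z : ℤ => (z : ℝ) ^ 2 * a z)
    (hirr : AddSubgroup.closure {z : ℤ | 0 < a z} = ⊤)
    : Tendsto (fun lam : ℝ => Real.sqrt lam * G1 a lam 0 0) (𝓝[>] (0 : ℝ))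
      (𝓝 (gam1 a * Real.sqrt π)) := by
  obtain ⟨c, hc, hψc⟩ := isCompact_Icc.exists_forall_le' (continuous_psi1 hvar).continuousOn
    fun θ hθ => psi1_pos hpos hneg hvar hirr hθ
  have hlim := tendsto_sqrt_mul_setIntegral_inv_add_mul_sq (continuous_psi1 hvar)
    measurableSet_Ioc (Ioc_mem_nhds (neg_lt_zero.2 pi_pos) pi_pos) hc
    fun θ hθ => hψc θ (Ioc_subset_Icc_self hθ)
  rw [psi1_zero hpos] at hlim
  rw [gam1_mul_sqrt_pi]
  refine (hlim.const_mul (2 * π)⁻¹).congr' ?_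
  filter_upwards [self_mem_nhdsWithin] with lam (hlam : 0 < lam)
  simp only [G1_zero_zero_eq hpos hsum hvar hlam, phi1_eq_neg_psi1_mul_sq hsum, sub_neg_eq_add]
  ring

/-- For `d = 1`: `G_λ(0,0) ~ γ₁√π/√λ` as `λ → 0+`, i.e. `√λ G_λ(0,0) → γ₁√π`. -/
theorem Glam_asymptotic_d1
    (a : ℤ → ℝ)
    (hpos : ∀ z : ℤ, z ≠ 0 → 0 ≤ a z)
    (hneg : a 0 < 0)
    (hsymm : ∀ z : ℤ, a (-z) = a z)
    (hsum : HasSum a 0)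
    (hvar : Summable fun z : ℤ => (z : ℝ) ^ 2 * a z)
    (hirr : AddSubgroup.closure {z : ℤ | 0 < a z} = ⊤)
    : Tendsto (fun lam : ℝ => Real.sqrt lam * G1 a lam 0 0) (𝓝[>] (0 : ℝ))
      (𝓝 (gam1 a * Real.sqrt π)) :=
  Glam_asymptotic_d1_general a hpos hneg hsum hvar hirr
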